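/- Lemma 7: let m ≥ 4 and let n be the least natural number (n ≥ 1) with G(n, m) = 0. Then there exists a natural number n₂ ≥ 2 such that n = 2·(2·n₂ + 1) and G(n₂ − 1, m) = 2·n₂; that is, the hereditary representation of the (n₂−1)-th term in its base n₂ is 2·n₂^1 + 0·n₂^0. -/

import Mathlib

/-- `hsub b u m` substitutes the value `u` for the base `b` throughout the
hereditary base-`b` representation of `m` (with `hsub b u 0 = 0`). -/
def hsub (b u : ℕ) (m : ℕ) : ℕ :=
  if m = 0 then 0
  else
    u ^ hsub b u (Nat.log b m) * (m / b ^ Nat.log b m) + hsub b u (m % b ^ Nat.log b m)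
termination_by m
decreasing_by
  · exact Nat.log_lt_self b (by assumption)
  · have hpos : 0 < b ^ Nat.log b m := by
      rcases Nat.eq_zero_or_pos b with hb | hb
      · simp [hb]
      · exact pow_pos hb _
    exact lt_of_lt_of_le (Nat.mod_lt _ hpos) (Nat.pow_log_le_self b (by assumption))

/-- Goodstein's base-change ("bumping") function: replace the base `b` by `b + 1`
throughout the hereditary base-`b` representation of `m` (with `B b 0 = 0`). -/
def B (b m : ℕ) : ℕ := hsub b (b + 1) m

/-- The Goodstein sequence of `m`: `G 1 m = m`, and `G (k+1) m = B (k+1) (G k m) - 1`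
for `k ≥ 1` (truncated subtraction), so the `k`-th term is written in hereditary
base `k + 1`. -/
def G : ℕ → ℕ → ℕ
  | 0, m => m
  | 1, m => m
  | (k + 2), m => B (k + 2) (G (k + 1) m) - 1

/-- The auxiliary Goodstein-type sequence: `L 1 k = k ^ k` (written in hereditary
base `k`), and `L (n+1) k = B (k+n-1) (L n k) - 1` for `n ≥ 1` (truncated
subtraction), so the `n`-th term is written in hereditary base `k + n - 1`. -/
def L : ℕ → ℕ → ℕ
  | 0, k => k ^ k
  | 1, k => k ^ k
  | (n + 2), k => B (k + n) (L (n + 1) k) - 1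

/-- `O b m` is the ordinal obtained by substituting `ω` for the base `b`
throughout the hereditary base-`b` representation of `m` (with `O b 0 = 0`). -/
noncomputable def O (b : ℕ) (m : ℕ) : Ordinal :=
  if m = 0 then 0
  else
    Ordinal.omega0 ^ O b (Nat.log b m) * ((m / b ^ Nat.log b m : ℕ) : Ordinal)
      + O b (m % b ^ Nat.log b m)
termination_by m
decreasing_by
  · exact Nat.log_lt_self b (by assumption)
  · have hpos : 0 < b ^ Nat.log b m := by
      rcases Nat.eq_zero_or_pos b with hb | hb
      · simp [hb]
      · exact pow_pos hb _
    exact lt_of_lt_of_le (Nat.mod_lt _ hpos) (Nat.pow_log_le_self b (by assumption))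

/-!
Substituting `u ≥ b ≥ 2` for the base in hereditary base-`b` notation is strictly monotone
(compare leading exponent, then leading digit, then remainder); the bound
`hsub r < u ^ hsub e` for `r < b ^ e` needs monotonicity on the smaller exponents, hence one
strong induction for both. So every base change `B b` is injective, and a nonzero term of the
Goodstein sequence is determined by the next one through `B (t + 1) (G t) = G (t + 1) + 1`.

Reading backwards from the first zero `G n = 0`, the terms are `0, 1, 2, …` as long as they are
digits of the current base, since `B b d = d`. If `n = 2 j + 1` this requires
`B (j + 1) (G j) = j + 1`, but `B b` never takes the value `b`; so `n = 2 j` and `G j = j`.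
As `B b (b + d) = b + d + 1`, the value `j` then persists back to index `j - ⌊(j + 1) / 2⌋`.
If `j = 2 k` this requires `B k (G (k - 1)) = 2 k + 1`, a value skipped by `B k`, which sends
`2 k - 1` to `2 k` and `2 k` to at least `2 k + 2`. So `j = 2 k + 1`, and
`B k (G (k - 1)) = 2 k + 2` forces `G (k - 1) = 2 k`.
-/

open Nat

section HereditarySubstitution

variable {b u : ℕ}

theorem hsub_zero (b u : ℕ) : hsub b u 0 = 0 := by
  rw [hsub]
  simp

theorem hsub_of_ne_zero {m : ℕ} (hm : m ≠ 0) :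
    hsub b u m = u ^ hsub b u (log b m) * (m / b ^ log b m) + hsub b u (m % b ^ log b m) := by
  rw [hsub, if_neg hm]

theorem hsub_eq_of_lt_pow_succ {m e : ℕ} (hm : m < b ^ (e + 1)) :
    hsub b u m = u ^ hsub b u e * (m / b ^ e) + hsub b u (m % b ^ e) := by
  rcases eq_or_ne m 0 with rfl | hm0
  · simp [hsub_zero]
  rcases lt_or_ge m (b ^ e) with hlt | hle
  · simp [Nat.div_eq_of_lt hlt, Nat.mod_eq_of_lt hlt]
  · rw [hsub_of_ne_zero hm0, log_eq_of_pow_le_of_lt_pow hle hm]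

theorem hsub_of_lt {d : ℕ} (hd : d < b) : hsub b u d = d := by
  rw [hsub_eq_of_lt_pow_succ (u := u) (e := 0) (by simpa using hd),
    pow_zero, Nat.div_one, Nat.mod_one, hsub_zero, pow_zero, one_mul, add_zero]

theorem hsub_mul_add {a d : ℕ} (ha : 0 < a) (hab : a < b) (hd : d < b) :
    hsub b u (a * b + d) = u * a + d := by
  have hlt : a * b + d < b ^ (1 + 1) := by
    have : (a + 1) * b ≤ b * b := Nat.mul_le_mul_right b hab
    rw [add_one_mul] at this
    rw [pow_two]
    linarith
  have hdiv : (a * b + d) / b ^ 1 = a := by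
    rw [pow_one, mul_comm a b, Nat.mul_add_div (by omega), Nat.div_eq_of_lt hd, add_zero]
  have hmod : (a * b + d) % b ^ 1 = d := by
    rw [pow_one, mul_comm a b, Nat.mul_add_mod, Nat.mod_eq_of_lt hd]
  rw [hsub_eq_of_lt_pow_succ hlt, hdiv, hmod, hsub_of_lt (by omega : 1 < b), hsub_of_lt hd,
    pow_one]

theorem hsub_lt_pow_hsub (hb : 2 ≤ b) (hu : b ≤ u) {E : ℕ}
    (hmono : StrictMonoOn (hsub b u) (Set.Iic E)) {m : ℕ} (hm : m < b ^ E) :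
    hsub b u m < u ^ hsub b u E := by
  induction E generalizing m with
  | zero => simp_all [hsub_zero]
  | succ e ih =>
    have hrem : hsub b u (m % b ^ e) < u ^ hsub b u e :=
      ih (hmono.mono (Set.Iic_subset_Iic.mpr e.le_succ)) (Nat.mod_lt _ (by positivity))
    have hdigit : m / b ^ e < b := Nat.div_lt_of_lt_mul (by rwa [← pow_succ])
    have hexp : hsub b u e < hsub b u (e + 1) :=
      hmono (Set.mem_Iic.mpr e.le_succ) (Set.mem_Iic.mpr le_rfl) e.lt_succ_self
    calc hsub b u m
        = u ^ hsub b u e * (m / b ^ e) + hsub b u (m % b ^ e) := hsub_eq_of_lt_pow_succ hm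
      _ < u ^ hsub b u e * (m / b ^ e + 1) := by rw [Nat.mul_add_one]; omega
      _ ≤ u ^ hsub b u e * u := Nat.mul_le_mul_left _ (by omega)
      _ = u ^ (hsub b u e + 1) := (pow_succ _ _).symm
      _ ≤ u ^ hsub b u (e + 1) := Nat.pow_le_pow_right (by omega) hexp

theorem hsub_strictMono (hb : 2 ≤ b) (hu : b ≤ u) : StrictMono (hsub b u) := by
  suffices h : ∀ y x, x < y → hsub b u x < hsub b u y from fun x y hxy => h y x hxy
  intro y
  induction y using Nat.strong_induction_on with
  | _ y ih =>
  intro x hxy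
  have hy0 : y ≠ 0 := by omega
  set e := log b y
  have hmono : StrictMonoOn (hsub b u) (Set.Iic e) := fun p _ q hq hpq =>
    ih q (lt_of_le_of_lt hq (log_lt_self b hy0)) p hpq
  have hpow : 0 < b ^ e := by positivity
  have hy : y < b ^ (e + 1) := lt_pow_succ_log_self hb y
  rw [hsub_eq_of_lt_pow_succ hy, hsub_eq_of_lt_pow_succ (hxy.trans hy)]
  have hx_div := Nat.div_add_mod x (b ^ e)
  have hy_div := Nat.div_add_mod y (b ^ e)
  rcases (Nat.div_le_div_right (c := b ^ e) hxy.le).lt_or_eq with hlt | heq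
  · have hrem : hsub b u (x % b ^ e) < u ^ hsub b u e :=
      hsub_lt_pow_hsub hb hu hmono (Nat.mod_lt _ hpow)
    have : u ^ hsub b u e * (x / b ^ e + 1) ≤ u ^ hsub b u e * (y / b ^ e) :=
      Nat.mul_le_mul_left _ hlt
    rw [Nat.mul_add_one] at this
    omega
  · have hrem : x % b ^ e < y % b ^ e := by rw [heq] at hx_div; omega
    have hy_rem : y % b ^ e < y := (Nat.mod_lt _ hpow).trans_le (pow_log_le_self b hy0)
    rw [heq]
    exact Nat.add_lt_add_left (ih _ hy_rem _ hrem) _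

end HereditarySubstitution

section BaseChange

variable {b : ℕ}

theorem B_strictMono (hb : 2 ≤ b) : StrictMono (B b) :=
  hsub_strictMono hb b.le_succ

theorem B_of_lt {d : ℕ} (hd : d < b) : B b d = d :=
  hsub_of_lt hd

theorem B_mul_add {a d : ℕ} (ha : 0 < a) (hab : a < b) (hd : d < b) :
    B b (a * b + d) = (b + 1) * a + d :=
  hsub_mul_add ha hab hd

theorem B_add_of_lt (hb : 2 ≤ b) {d : ℕ} (hd : d < b) : B b (b + d) = b + d + 1 := by
  have h := B_mul_add (a := 1) one_pos hb hd
  rw [one_mul, mul_one] at h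
  omega

theorem B_two_four : B 2 4 = 27 := by
  have h := hsub_eq_of_lt_pow_succ (b := 2) (u := 3) (m := 4) (e := 2) (by norm_num)
  have h2 : hsub 2 3 2 = 3 := B_add_of_lt (b := 2) (d := 0) le_rfl two_pos
  show hsub 2 3 4 = 27
  norm_num [h2, hsub_zero] at h
  exact h

theorem B_ne_self (hb : 2 ≤ b) (x : ℕ) : B b x ≠ b := by
  obtain ⟨c, rfl⟩ : ∃ c, b = c + 1 := ⟨b - 1, by omega⟩
  refine (B_strictMono hb).monotone.ne_of_lt_of_lt_nat c ?_ ?_ x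
  · rw [B_of_lt c.lt_succ_self]
    exact c.lt_succ_self
  · have := B_add_of_lt (b := c + 1) (d := 0) hb (by omega)
    rw [add_zero] at this
    omega

theorem B_two_mul_sub_one (hb : 2 ≤ b) : B b (2 * b - 1) = 2 * b := by
  have h := B_add_of_lt hb (d := b - 1) (by omega)
  rw [show b + (b - 1) = 2 * b - 1 by omega] at h
  omega

theorem B_two_mul (hb : 3 ≤ b) : B b (2 * b) = 2 * b + 2 := by
  have h := B_mul_add (a := 2) two_pos (by omega) (by omega : 0 < b)
  rw [add_zero] at h
  rw [h]
  ring

theorem two_mul_add_two_le_B_two_mul (hb : 2 ≤ b) : 2 * b + 2 ≤ B b (2 * b) := by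
  rcases hb.eq_or_lt with rfl | hb
  · rw [B_two_four]
    norm_num
  · rw [B_two_mul hb]

theorem B_ne_two_mul_add_one (hb : 2 ≤ b) (x : ℕ) : B b x ≠ 2 * b + 1 := by
  refine (B_strictMono hb).monotone.ne_of_lt_of_lt_nat (2 * b - 1) ?_ ?_ x
  · rw [B_two_mul_sub_one hb]
    omega
  · rw [show 2 * b - 1 + 1 = 2 * b by omega]
    have := two_mul_add_two_le_B_two_mul hb
    omega

theorem eq_two_mul_of_B_eq (hb : 2 ≤ b) {x : ℕ} (hx : B b x = 2 * b + 2) : x = 2 * b := by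
  rcases hb.eq_or_lt with rfl | hb
  · refine absurd hx ((B_strictMono le_rfl).monotone.ne_of_lt_of_lt_nat 3 ?_ ?_ x)
    · rw [show 3 = 2 * 2 - 1 from rfl, B_two_mul_sub_one le_rfl]
      norm_num
    · rw [B_two_four]
      norm_num
  · exact (B_strictMono hb.le).injective (hx.trans (B_two_mul hb).symm)

end BaseChange

section Goodstein

variable {m : ℕ}

theorem G_one (m : ℕ) : G 1 m = m := rfl

theorem B_G_pred {t : ℕ} (ht : 2 ≤ t) (h : G (t - 1) m ≠ 0) :
    B t (G (t - 1) m) = G t m + 1 := by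
  obtain ⟨s, rfl⟩ : ∃ s, t = s + 2 := ⟨t - 2, by omega⟩
  have hpos : 0 < B (s + 2) (G (s + 1) m) :=
    (B_strictMono (by omega)).le_apply.trans_lt' (Nat.pos_of_ne_zero h)
  change B (s + 2) (G (s + 1) m) = B (s + 2) (G (s + 1) m) - 1 + 1
  omega

theorem G_pred_eq_of_B_eq {t w : ℕ} (ht : 2 ≤ t) (h : G (t - 1) m ≠ 0)
    (hw : B t w = G t m + 1) : G (t - 1) m = w :=
  (B_strictMono ht).injective ((B_G_pred ht h).trans hw.symm)

variable {n : ℕ} (hn : G n m = 0) (hne : ∀ t, 1 ≤ t → t < n → G t m ≠ 0)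
include hn hne

theorem G_sub_eq_of_first_zero : ∀ i, 2 * i < n → G (n - i) m = i
  | 0, _ => hn
  | i + 1, hi => by
    rw [Nat.sub_add_eq]
    refine G_pred_eq_of_B_eq (by omega) (hne _ (by omega) (by omega)) ?_
    rw [G_sub_eq_of_first_zero i (by omega), B_of_lt (by omega)]

theorem even_of_first_zero (hn2 : 2 ≤ n) : Even n := by
  rcases Nat.even_or_odd n with h | ⟨j, rfl⟩
  · exact h
  have hj := G_sub_eq_of_first_zero hn hne j (by omega)
  rw [show 2 * j + 1 - j = j + 1 by omega] at hj
  have := B_G_pred (m := m) (t := j + 1) (by omega) (hne j (by omega) (by omega))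
  exact absurd (this.trans (by rw [hj])) (B_ne_self (by omega) _)

theorem G_sub_eq_half_of_first_zero {j : ℕ} (hnj : n = j + j) (hj : 2 ≤ j) :
    ∀ s, 2 * s ≤ j + 1 → G (j - s) m = j
  | 0, _ => by
    have h := G_sub_eq_of_first_zero hn hne (j - 1) (by omega)
    rw [show n - (j - 1) = j + 1 by omega] at h
    refine G_pred_eq_of_B_eq (t := j + 1) (by omega) (hne j (by omega) (by omega)) ?_
    rw [h, B_of_lt (by omega)]
    omega
  | s + 1, hs => by
    rw [Nat.sub_add_eq]
    refine G_pred_eq_of_B_eq (by omega) (hne _ (by omega) (by omega)) ?_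
    rw [G_sub_eq_half_of_first_zero hnj hj s (by omega)]
    have h := B_add_of_lt (b := j - s) (d := s) (by omega) (by omega)
    rwa [Nat.sub_add_cancel (by omega)] at h

end Goodstein

theorem goodstein_lemma7_general (m n : ℕ) (hm : 4 ≤ m) (hn : G n m = 0)
    (hmin : ∀ j : ℕ, 1 ≤ j → G j m = 0 → n ≤ j) :
    ∃ n₂ : ℕ, 2 ≤ n₂ ∧ n = 2 * (2 * n₂ + 1) ∧ G (n₂ - 1) m = 2 * n₂ := by
  have hne : ∀ t, 1 ≤ t → t < n → G t m ≠ 0 := fun t ht htn h => (hmin t ht h).not_gt htn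
  have hn2 : 2 ≤ n := by
    by_contra h
    interval_cases n <;> simp only [G] at hn <;> omega
  obtain ⟨j, rfl⟩ := even_of_first_zero hn hne hn2
  have hj : 2 ≤ j := by
    by_contra h
    obtain rfl : j = 1 := by omega
    have h2 : B 2 m = G (1 + 1) m + 1 := B_G_pred le_rfl (hne 1 le_rfl (by omega))
    have := (B_strictMono le_rfl).le_apply (x := m)
    omega
  have plateau := G_sub_eq_half_of_first_zero hn hne rfl hj
  obtain ⟨k, rfl⟩ : Odd j := by
    refine Nat.not_even_iff_odd.mp fun ⟨k, hk⟩ => ?_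
    have hGk : G k m = j := by simpa [hk] using plateau k (by omega)
    have hk2 : 2 ≤ k := by
      by_contra h
      interval_cases k <;> simp_all [G_one]
    exact B_ne_two_mul_add_one hk2 _
      ((B_G_pred hk2 (hne _ (by omega) (by omega))).trans (by omega))
  have hGk : G k m = 2 * k + 1 := by
    simpa [show 2 * k + 1 - (k + 1) = k by omega] using plateau (k + 1) (by omega)
  have hk2 : 2 ≤ k := by
    by_contra h
    interval_cases k <;> simp_all [G_one]
  refine ⟨k, hk2, by ring, eq_two_mul_of_B_eq hk2 ?_⟩
  rw [B_G_pred hk2 (hne _ (by omega) (by omega)), hGk]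

/-- **Lemma 7**: let `m ≥ 4` and let `n` be the least natural number (`n ≥ 1`)
with `G n m = 0`. Then there exists `n₂ ≥ 2` such that `n = 2 * (2 * n₂ + 1)`
and `G (n₂ - 1) m = 2 * n₂` (i.e., the hereditary representation of the
`(n₂-1)`-th term in its base `n₂` is `2·n₂^1 + 0·n₂^0`). -/
theorem goodstein_lemma7 (m n : ℕ) (hm : 4 ≤ m) (hn1 : 1 ≤ n) (hn : G n m = 0)
    (hmin : ∀ j : ℕ, 1 ≤ j → G j m = 0 → n ≤ j) :
    ∃ n₂ : ℕ, 2 ≤ n₂ ∧ n = 2 * (2 * n₂ + 1) ∧ G (n₂ - 1) m = 2 * n₂ :=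
  goodstein_lemma7_general m n hm hn hmin
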